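/- Any rope cover R of a finite arc set E can be transformed into a rope cover R' with |R'| ≤ |R| in which fewer pairs of leaning arcs exist: specifically, if r1, r2 ∈ R with r1 leaning on r2, then there is a rope cover R' with |R'| ≤ |R| and strictly smaller total sum of arc lengths. -/

import Mathlib

/-!
Drop `r1` from the cover. Arcs leaning on `r1` at the endpoint it shares with `r2` lean on `r2`
as well; the remaining ones all share `r1`'s other endpoint, so they form a chain under leaning
and are supported by the longest of them, which is strictly shorter than `r1`. Replacing `r1` by
that arc (or by nothing) keeps a rope cover, does not increase the size and decreases the total
length.
-/

def leansOn (a b : ℕ × ℕ) : Prop :=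
  b.1 ≤ a.1 ∧ a.1 < a.2 ∧ a.2 ≤ b.2 ∧ a ≠ b ∧ (a.1 = b.1 ∨ a.2 = b.2)

def IsRopeCover (E R : Finset (ℕ × ℕ)) : Prop :=
  R ⊆ E ∧ ∀ a ∈ E \ R, ∃ b ∈ R, leansOn a b

/-- Total sum of arc lengths of a set of arcs. -/
def totalLen (R : Finset (ℕ × ℕ)) : ℕ := ∑ a ∈ R, (a.2 - a.1)

open Finset

theorem leansOn.len_lt {a b : ℕ × ℕ} (h : leansOn a b) : a.2 - a.1 < b.2 - b.1 := by
  simp only [leansOn, ne_eq, Prod.ext_iff] at h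
  omega

/-- `x` and `y` share with `r₁` the endpoint that `r₂` lacks, hence share an endpoint with each
other. -/
theorem leansOn_of_not_leansOn {r₁ r₂ x y : ℕ × ℕ} (h : leansOn r₁ r₂)
    (hx : leansOn x r₁) (hx' : ¬leansOn x r₂) (hy : leansOn y r₁) (hy' : ¬leansOn y r₂)
    (hxy : x ≠ y) (hlen : x.2 - x.1 ≤ y.2 - y.1) : leansOn x y := by
  simp only [leansOn, ne_eq, Prod.ext_iff] at *
  omega

theorem totalLen_union_le (s t : Finset (ℕ × ℕ)) : totalLen (s ∪ t) ≤ totalLen s + totalLen t :=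
  (sum_union_inter (f := fun a : ℕ × ℕ => a.2 - a.1)).le.trans' (Nat.le_add_right _ _)

theorem totalLen_erase_add {R : Finset (ℕ × ℕ)} {r : ℕ × ℕ} (hr : r ∈ R) :
    totalLen (R.erase r) + (r.2 - r.1) = totalLen R :=
  sum_erase_add _ _ hr

theorem totalLen_lt_of_card_le_one {A : Finset (ℕ × ℕ)} {r : ℕ × ℕ} (hA : #A ≤ 1)
    (hlean : ∀ a ∈ A, leansOn a r) (hr : r.1 < r.2) : totalLen A < r.2 - r.1 := by
  obtain ⟨a, haA⟩ := card_le_one_iff_subset_singleton.mp hA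
  obtain rfl | rfl := subset_singleton_iff.mp haA
  · simpa [totalLen] using hr
  · simpa [totalLen] using (hlean a (mem_singleton_self a)).len_lt

theorem exists_card_le_one_cover {T : Finset (ℕ × ℕ)}
    (hT : ∀ x ∈ T, ∀ y ∈ T, x ≠ y → x.2 - x.1 ≤ y.2 - y.1 → leansOn x y) :
    ∃ A ⊆ T, #A ≤ 1 ∧ ∀ x ∈ T \ A, ∃ b ∈ A, leansOn x b := by
  obtain rfl | hne := T.eq_empty_or_nonempty
  · exact ⟨∅, empty_subset _, by simp, by simp⟩
  obtain ⟨a, ha, hmax⟩ := T.exists_max_image (fun x => x.2 - x.1) hne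
  refine ⟨{a}, singleton_subset_iff.mpr ha, (card_singleton a).le, fun x hx => ?_⟩
  rw [mem_sdiff, mem_singleton] at hx
  exact ⟨a, mem_singleton_self a, hT x hx.1 a ha hx.2 (hmax x hx.1)⟩

theorem IsRopeCover.erase_union {E R A : Finset (ℕ × ℕ)} {r : ℕ × ℕ} (hR : IsRopeCover E R)
    (hAE : A ⊆ E)
    (hA : ∀ x ∈ E \ A, (x = r ∨ leansOn x r) → ∃ b ∈ R.erase r ∪ A, leansOn x b) :
    IsRopeCover E (R.erase r ∪ A) := by
  refine ⟨union_subset ((erase_subset r R).trans hR.1) hAE, fun x hx => ?_⟩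
  simp only [mem_sdiff, mem_union, mem_erase, not_or, not_and] at hx
  obtain ⟨hxE, hxR, hxA⟩ := hx
  by_cases hxr : x = r
  · exact hA x (mem_sdiff.mpr ⟨hxE, hxA⟩) (.inl hxr)
  obtain ⟨b, hb, hxb⟩ := hR.2 x (mem_sdiff.mpr ⟨hxE, hxR hxr⟩)
  by_cases hbr : b = r
  · exact hA x (mem_sdiff.mpr ⟨hxE, hxA⟩) (.inr (hbr ▸ hxb))
  · exact ⟨b, mem_union_left _ (mem_erase.mpr ⟨hbr, hb⟩), hxb⟩

theorem ropeCover_improve_general (E : Finset (ℕ × ℕ))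
    (R : Finset (ℕ × ℕ)) (hR : IsRopeCover E R)
    (r1 r2 : ℕ × ℕ) (h1 : r1 ∈ R) (h2 : r2 ∈ R) (hlean : leansOn r1 r2) :
    ∃ R', IsRopeCover E R' ∧ R'.card ≤ R.card ∧ totalLen R' < totalLen R := by
  classical
  set T := E.filter fun x => leansOn x r1 ∧ ¬leansOn x r2
  have hT : ∀ x ∈ T, ∀ y ∈ T, x ≠ y → x.2 - x.1 ≤ y.2 - y.1 → leansOn x y := by
    intro x hx y hy
    rw [mem_filter] at hx hy
    exact leansOn_of_not_leansOn hlean hx.2.1 hx.2.2 hy.2.1 hy.2.2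
  obtain ⟨A, hAT, hA1, hAcov⟩ := exists_card_le_one_cover hT
  have hr2 : r2 ∈ R.erase r1 ∪ A := mem_union_left _ (mem_erase.mpr ⟨hlean.2.2.2.1.symm, h2⟩)
  refine ⟨R.erase r1 ∪ A, hR.erase_union (hAT.trans (filter_subset _ _)) ?_, ?_, ?_⟩
  · rintro x hx (rfl | hxr1)
    · exact ⟨r2, hr2, hlean⟩
    by_cases hxr2 : leansOn x r2
    · exact ⟨r2, hr2, hxr2⟩
    obtain ⟨hxE, hxA⟩ := mem_sdiff.mp hx
    obtain ⟨b, hb, hxb⟩ := hAcov x (mem_sdiff.mpr ⟨mem_filter.mpr ⟨hxE, hxr1, hxr2⟩, hxA⟩)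
    exact ⟨b, mem_union_right _ hb, hxb⟩
  · have := card_erase_add_one h1
    have := card_union_le (R.erase r1) A
    omega
  · have hAlen := totalLen_lt_of_card_le_one hA1 (fun a ha => (mem_filter.mp (hAT ha)).2.1)
      hlean.2.1
    have := totalLen_erase_add h1
    have := totalLen_union_le (R.erase r1) A
    omega

/-- If a rope cover `R` contains two arcs `r1` leaning on `r2`, then it can be transformed
into a rope cover `R'` with `|R'| ≤ |R|` and strictly smaller total sum of arc lengths. -/
theorem ropeCover_improve (E : Finset (ℕ × ℕ)) (hE : ∀ a ∈ E, a.1 < a.2)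
    (R : Finset (ℕ × ℕ)) (hR : IsRopeCover E R)
    (r1 r2 : ℕ × ℕ) (h1 : r1 ∈ R) (h2 : r2 ∈ R) (hlean : leansOn r1 r2) :
    ∃ R', IsRopeCover E R' ∧ R'.card ≤ R.card ∧ totalLen R' < totalLen R :=
  ropeCover_improve_general E R hR r1 r2 h1 h2 hlean
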